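/- arXiv:1907.00628 — 3 statements merged into one kernel-verified Lean document; each statement's English description precedes it below -/
import Mathlib

section
/- Let N ∈ (0,1), R_c > 0, h > 0, k = 2N√((1−N²)/R_c) and G ∈ ℝ. Set D = −2h·sinh(kh) + (4N²/k)(cosh(kh) − 1), A₂ = sinh(kh)/D and B₂ = −(cosh(kh) − 1)/D. Define u, w : ℝ → ℝ by u(t) = G·(−t/(2N²) + (h/(2N²))·(((2N²/k)sinh(kt) − 2t)·A₂ + (2N²/k)(cosh(kt) − 1)·B₂)) and w(t) = G·(h/(2N²))·((cosh(kt) − 1)·A₂ + sinh(kt)·B₂). Then for every t one has u''(t) = 2N² w'(t) and −R_c w''(t) + 4N² w(t) − 2N² u'(t) = G, and moreover u(0) = u(h) = w(0) = w(h) = 0. -/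
/-!
The functions `u` and `w` are both of the form `a cosh (k t) + b sinh (k t) + c t + d`, a family
closed under differentiation, so the two differential equations reduce to comparing the
coefficients of `cosh (k t)`, `sinh (k t)` and `1`, where `R_c k² = 4N²(1 - N²)` is what makes the
`cosh`/`sinh` coefficients of the second equation cancel. At `t = h`, `A₂ (cosh kh - 1) + B₂ sinh kh`
vanishes outright, and by `cosh² - sinh² = 1` the bracket in `u h` is `D / D = 1`; here `D < 0`
because `2 (cosh x - 1) ≤ x sinh x` for `x ≥ 0`.
-/

open Real

theorem Real.sinh_le_mul_cosh {x : ℝ} (hx : 0 ≤ x) : sinh x ≤ x * cosh x := by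
  have hmono : MonotoneOn (fun y => y * cosh y - sinh y) (Set.Ici 0) := by
    refine monotoneOn_of_hasDerivWithinAt_nonneg (convex_Ici 0) (by fun_prop)
      (fun y _ => (((hasDerivAt_id y).mul (hasDerivAt_cosh y)).sub
        (hasDerivAt_sinh y)).hasDerivWithinAt) fun y hy => ?_
    rw [interior_Ici, Set.mem_Ioi] at hy
    have : 0 ≤ y * sinh y := mul_nonneg hy.le (sinh_nonneg_iff.mpr hy.le)
    simp only [id, one_mul]
    linarith
  simpa using hmono Set.self_mem_Ici hx hx

theorem Real.two_mul_cosh_sub_one_le_mul_sinh {x : ℝ} (hx : 0 ≤ x) :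
    2 * (cosh x - 1) ≤ x * sinh x := by
  obtain ⟨y, rfl⟩ : ∃ y, x = 2 * y := ⟨x / 2, by ring⟩
  have hy : 0 ≤ y := by linarith
  rw [cosh_two_mul, sinh_two_mul, cosh_sq']
  nlinarith [sinh_le_mul_cosh hy, sinh_nonneg_iff.mpr hy]

theorem micropolar_denominator_neg {m k h : ℝ} (hm : m < 1) (hk : 0 < k) (hh : 0 < h) :
    -2 * h * sinh (k * h) + 4 * m / k * (cosh (k * h) - 1) < 0 := by
  have hkh : 0 < k * h := mul_pos hk hh
  have hc : 0 < cosh (k * h) - 1 := sub_pos.mpr (one_lt_cosh.mpr hkh.ne')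
  have key := two_mul_cosh_sub_one_le_mul_sinh hkh.le
  have hfactor : -2 * h * sinh (k * h) + 4 * m / k * (cosh (k * h) - 1) =
      2 / k * (2 * m * (cosh (k * h) - 1) - k * h * sinh (k * h)) := by
    field_simp
    ring
  rw [hfactor]
  exact mul_neg_of_pos_of_neg (by positivity) (by nlinarith)

noncomputable def coshSinhAffine (a b c d k t : ℝ) : ℝ :=
  a * cosh (k * t) + b * sinh (k * t) + c * t + d

theorem hasDerivAt_coshSinhAffine (a b c d k t : ℝ) :
    HasDerivAt (coshSinhAffine a b c d k) (coshSinhAffine (b * k) (a * k) 0 c k t) t := by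
  have hkt : HasDerivAt (k * ·) k t := by simpa using (hasDerivAt_id t).const_mul k
  refine (((hkt.cosh.const_mul a).add (hkt.sinh.const_mul b)).add
    ((hasDerivAt_id t).const_mul c)).add_const d |>.congr_deriv ?_
  simp only [coshSinhAffine]
  ring

theorem deriv_coshSinhAffine (a b c d k : ℝ) :
    deriv (coshSinhAffine a b c d k) = coshSinhAffine (b * k) (a * k) 0 c k :=
  funext fun t => (hasDerivAt_coshSinhAffine a b c d k t).deriv

theorem micropolar_wavenumber {N Rc k : ℝ} (hN0 : 0 < N) (hN1 : N < 1) (hRc : 0 < Rc)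
    (hk : k = 2 * N * √((1 - N ^ 2) / Rc)) :
    0 < k ∧ Rc * k ^ 2 = 4 * N ^ 2 * (1 - N ^ 2) := by
  have hpos : 0 < (1 - N ^ 2) / Rc := div_pos (by nlinarith) hRc
  refine ⟨hk ▸ by positivity, ?_⟩
  rw [hk, mul_pow, sq_sqrt hpos.le]
  field_simp
  ring

/-- Explicit solution of the reduced micropolar boundary-value problem with
microrotation forcing `G` (and no pressure-gradient forcing): the given
`u, w` satisfy `u'' = 2N² w'`, `−R_c w'' + 4N² w − 2N² u' = G`, and the
homogeneous boundary conditions at `0` and `h`. -/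
theorem reduced_micropolar_solution_microrotation
    (N Rc h G : ℝ) (hN0 : 0 < N) (hN1 : N < 1) (hRc : 0 < Rc) (hh : 0 < h)
    (k : ℝ) (hk : k = 2 * N * Real.sqrt ((1 - N ^ 2) / Rc))
    (D A₂ B₂ : ℝ)
    (hD : D = -2 * h * Real.sinh (k * h) + (4 * N ^ 2 / k) * (Real.cosh (k * h) - 1))
    (hA₂ : A₂ = Real.sinh (k * h) / D)
    (hB₂ : B₂ = -(Real.cosh (k * h) - 1) / D)
    (u w : ℝ → ℝ)
    (hu : u = fun t => G * (-t / (2 * N ^ 2) + (h / (2 * N ^ 2)) *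
      (((2 * N ^ 2 / k) * Real.sinh (k * t) - 2 * t) * A₂ +
        (2 * N ^ 2 / k) * (Real.cosh (k * t) - 1) * B₂)))
    (hw : w = fun t => G * (h / (2 * N ^ 2)) *
      ((Real.cosh (k * t) - 1) * A₂ + Real.sinh (k * t) * B₂)) :
    (∀ t : ℝ, deriv (deriv u) t = 2 * N ^ 2 * deriv w t) ∧
    (∀ t : ℝ, -Rc * deriv (deriv w) t + 4 * N ^ 2 * w t - 2 * N ^ 2 * deriv u t = G) ∧
    u 0 = 0 ∧ u h = 0 ∧ w 0 = 0 ∧ w h = 0 := by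
  obtain ⟨hk0, hRck⟩ := micropolar_wavenumber hN0 hN1 hRc hk
  have hD0 : D ≠ 0 := hD ▸ (micropolar_denominator_neg (by nlinarith) hk0 hh).ne
  have hu_affine : u = coshSinhAffine (G * h * B₂ / k) (G * h * A₂ / k)
      (-G / (2 * N ^ 2) - G * h * A₂ / N ^ 2) (-(G * h * B₂ / k)) k := by
    funext t
    simp only [hu, coshSinhAffine]
    field_simp
    ring
  have hw_affine : w = coshSinhAffine (G * h * A₂ / (2 * N ^ 2)) (G * h * B₂ / (2 * N ^ 2)) 0
      (-(G * h * A₂ / (2 * N ^ 2))) k := by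
    funext t
    simp only [hw, coshSinhAffine]
    ring
  refine ⟨fun t => ?_, fun t => ?_, ?_, ?_, ?_, ?_⟩
  · rw [hu_affine, hw_affine, deriv_coshSinhAffine, deriv_coshSinhAffine, deriv_coshSinhAffine]
    simp only [coshSinhAffine]
    field_simp
    ring
  · rw [hu_affine, hw_affine, deriv_coshSinhAffine, deriv_coshSinhAffine, deriv_coshSinhAffine]
    simp only [coshSinhAffine]
    field_simp
    linear_combination (-(G * h * (A₂ * cosh (k * t) + B₂ * sinh (k * t)))) * hRck
  · simp [hu]
  · have hX : (2 * N ^ 2 / k * sinh (k * h) - 2 * h) * A₂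
        + 2 * N ^ 2 / k * (cosh (k * h) - 1) * B₂ = 1 := by
      rw [hA₂, hB₂, ← mul_div_assoc, ← mul_div_assoc, ← add_div, div_eq_one_iff_eq hD0, hD]
      linear_combination (-2 * N ^ 2 / k) * cosh_sq_sub_sinh_sq (k * h)
    simp only [hu, hX]
    ring
  · simp [hw]
  · rw [hw, hA₂, hB₂]
    ring
end

section
/- Let N ∈ (0,1), R_c > 0, h > 0, k = 2N√((1−N²)/R_c) and G ∈ ℝ. Set D = −2h·sinh(kh) + (4N²/k)(cosh(kh) − 1), A₂ = sinh(kh)/D, B₂ = −(cosh(kh) − 1)/D, and let w(t) = G·(h/(2N²))·((cosh(kt) − 1)·A₂ + sinh(kt)·B₂). Then ∫₀^h w(t) dt = (h/(4N²)) · (2·tanh(kh/2) − kh)/(2N²·tanh(kh/2) − kh) · G, and the denominator 2N²·tanh(kh/2) − kh is strictly negative. -/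
/-!
Integrating termwise gives `∫₀ʰ w` in terms of `sinh (kh)` and `cosh (kh)`. With
`T = tanh (kh/2)` the half-angle identities `cosh (kh) - 1 = T sinh (kh)` and
`sinh (kh) (1 - T²) = 2T` cancel the common factor `sinh (kh)`, leaving the stated ratio.
The denominator is negative because `N² < 1` and `tanh y < y` for `y > 0`.
-/

open Real intervalIntegral

namespace Real

theorem sinh_lt_mul_cosh {x : ℝ} (hx : 0 < x) : sinh x < x * cosh x := by
  have hmono : StrictMonoOn (fun y ↦ y * cosh y - sinh y) (Set.Ici 0) := by
    refine strictMonoOn_of_deriv_pos (convex_Ici 0) (by fun_prop) fun y hy ↦ ?_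
    rw [interior_Ici, Set.mem_Ioi] at hy
    have hderiv : HasDerivAt (fun y ↦ y * cosh y - sinh y) (y * sinh y) y :=
      (((hasDerivAt_id' y).mul (hasDerivAt_cosh y)).sub (hasDerivAt_sinh y)).congr_deriv
        (by ring)
    rw [hderiv.deriv]
    exact mul_pos hy (sinh_pos_iff.2 hy)
  simpa using hmono Set.self_mem_Ici hx.le hx

theorem tanh_pos {x : ℝ} (hx : 0 < x) : 0 < tanh x := by
  rw [tanh_eq_sinh_div_cosh]
  exact div_pos (sinh_pos_iff.2 hx) (cosh_pos x)

theorem tanh_lt_self {x : ℝ} (hx : 0 < x) : tanh x < x := by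
  rw [tanh_eq_sinh_div_cosh, div_lt_iff₀ (cosh_pos x)]
  exact sinh_lt_mul_cosh hx

theorem cosh_sub_one_eq_tanh_half_mul_sinh (x : ℝ) : cosh x - 1 = tanh (x / 2) * sinh x := by
  have hx : x = 2 * (x / 2) := by ring
  rw [hx, cosh_two_mul, sinh_two_mul, ← hx, tanh_eq_sinh_div_cosh]
  field_simp
  linear_combination cosh_sq_sub_sinh_sq (x / 2)

theorem sinh_mul_one_sub_tanh_half_sq (x : ℝ) :
    sinh x * (1 - tanh (x / 2) ^ 2) = 2 * tanh (x / 2) := by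
  have hx : x = 2 * (x / 2) := by ring
  rw [hx, sinh_two_mul, ← hx, tanh_eq_sinh_div_cosh]
  have hc : cosh (x / 2) ≠ 0 := (cosh_pos (x / 2)).ne'
  field_simp
  linear_combination sinh (x / 2) * cosh_sq_sub_sinh_sq (x / 2)

end Real

theorem integral_cosh (a b : ℝ) : ∫ x in a..b, cosh x = sinh b - sinh a :=
  integral_eq_sub_of_hasDerivAt (fun x _ ↦ hasDerivAt_sinh x)
    (continuous_cosh.intervalIntegrable _ _)

theorem integral_sinh (a b : ℝ) : ∫ x in a..b, sinh x = cosh b - cosh a :=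
  integral_eq_sub_of_hasDerivAt (fun x _ ↦ hasDerivAt_cosh x)
    (continuous_sinh.intervalIntegrable _ _)

theorem integral_cosh_mul {k : ℝ} (hk : k ≠ 0) (a b : ℝ) :
    ∫ x in a..b, cosh (k * x) = (sinh (k * b) - sinh (k * a)) / k := by
  rw [integral_comp_mul_left (fun x ↦ cosh x) hk, integral_cosh, smul_eq_mul, inv_mul_eq_div]

theorem integral_sinh_mul {k : ℝ} (hk : k ≠ 0) (a b : ℝ) :
    ∫ x in a..b, sinh (k * x) = (cosh (k * b) - cosh (k * a)) / k := by
  rw [integral_comp_mul_left (fun x ↦ sinh x) hk, integral_sinh, smul_eq_mul, inv_mul_eq_div]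

theorem integral_cosh_mul_sub_one_mul_add_sinh_mul {k : ℝ} (hk : k ≠ 0) (b A B : ℝ) :
    ∫ t in (0 : ℝ)..b, ((cosh (k * t) - 1) * A + sinh (k * t) * B) =
      (sinh (k * b) / k - b) * A + (cosh (k * b) - 1) / k * B := by
  have hii : ∀ f : ℝ → ℝ, Continuous f → IntervalIntegrable f MeasureTheory.volume 0 b :=
    fun f hf ↦ hf.intervalIntegrable 0 b
  rw [integral_add (hii _ (by fun_prop)) (hii _ (by fun_prop)), integral_mul_const,
    integral_mul_const, integral_sub (hii _ (by fun_prop)) (hii _ (by fun_prop)),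
    integral_cosh_mul hk, integral_sinh_mul hk]
  simp

/-- Average of the microrotation component of the explicit solution with
microrotation forcing `G`:
`∫₀ʰ w = (h/(4N²)) (2 tanh(kh/2) − kh)/(2N² tanh(kh/2) − kh) G`, and the
denominator `2N² tanh(kh/2) − kh` is strictly negative. -/
theorem integral_w_microrotation_forcing
    (N Rc h G : ℝ) (hN0 : 0 < N) (hN1 : N < 1) (hRc : 0 < Rc) (hh : 0 < h)
    (k : ℝ) (hk : k = 2 * N * Real.sqrt ((1 - N ^ 2) / Rc))
    (D A₂ B₂ : ℝ)
    (hD : D = -2 * h * Real.sinh (k * h) + (4 * N ^ 2 / k) * (Real.cosh (k * h) - 1))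
    (hA₂ : A₂ = Real.sinh (k * h) / D)
    (hB₂ : B₂ = -(Real.cosh (k * h) - 1) / D)
    (w : ℝ → ℝ)
    (hw : w = fun t => G * (h / (2 * N ^ 2)) *
      ((Real.cosh (k * t) - 1) * A₂ + Real.sinh (k * t) * B₂)) :
    (∫ t in (0 : ℝ)..h, w t =
      (h / (4 * N ^ 2)) *
        ((2 * Real.tanh (k * h / 2) - k * h) /
          (2 * N ^ 2 * Real.tanh (k * h / 2) - k * h)) * G) ∧
    2 * N ^ 2 * Real.tanh (k * h / 2) - k * h < 0 := by
  have hk0 : 0 < k := by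
    have : 0 < (1 - N ^ 2) / Rc := div_pos (by nlinarith) hRc
    rw [hk]; positivity
  have hN2 : N ^ 2 < 1 := by nlinarith
  have hx0 : 0 < k * h := mul_pos hk0 hh
  have hs0 : sinh (k * h) ≠ 0 := (sinh_pos_iff.2 hx0).ne'
  have hsT := sinh_mul_one_sub_tanh_half_sq (k * h)
  rw [hw, integral_const_mul, integral_cosh_mul_sub_one_mul_add_sinh_mul hk0.ne', hB₂, hA₂, hD,
    cosh_sub_one_eq_tanh_half_mul_sinh (k * h)]
  set T := tanh (k * h / 2)
  set s := sinh (k * h)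
  have hT0 : 0 < T := tanh_pos (half_pos hx0)
  have hTx : 2 * T < k * h := by linarith [tanh_lt_self (half_pos hx0)]
  have hden : 2 * N ^ 2 * T - k * h < 0 := by nlinarith [mul_lt_mul_of_pos_right hN2 hT0]
  refine ⟨?_, hden⟩
  field_simp
  rw [div_eq_div_iff (by linarith) (by linarith)]
  linear_combination 4 * G * (2 * N ^ 2 * T - k * h) * hsT
end

section
/- Let N ∈ (0,1), R_c > 0, h > 0, k = 2N√((1−N²)/R_c) and q, G ∈ ℝ. Suppose u, w : ℝ → ℝ are twice continuously differentiable on [0,h], satisfy u''(t) = q + 2N² w'(t) and −R_c w''(t) + 4N² w(t) − 2N² u'(t) = G for all t ∈ [0,h], and u(0) = u(h) = w(0) = w(h) = 0. Then ∫₀^h u(t) dt = −(h³/(1−N²))·Φ(h,N,R_c)·q and ∫₀^h w(t) dt = (h/(4N²)) · (2·tanh(kh/2) − kh)/(2N²·tanh(kh/2) − kh) · G, where Φ(h,N,R_c) = 1/12 + R_c/(4h²(1−N²)) − (1/(4h))·√(N²R_c/(1−N²))·coth(N h √((1−N²)/R_c)). -/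
/-!
The reduced operator `L(u, w) = (u'' - 2N²w', -R_c w'' + 4N²w - 2N²u')` has the formal adjoint
`L*(φ, ψ) = (φ'' + 2N²ψ', -R_c ψ'' + 4N²ψ + 2N²φ')`, and for pairs vanishing at `0` and `h`
Green's formula gives `∫ L(u, w)·(φ, ψ) = ∫ (u, w)·L*(φ, ψ)`. Since `L(u, w) = (q, G)` is
constant, any `(φ, ψ)` with zero boundary values and `L*(φ, ψ)` a constant multiple of `(1, 0)`
or `(0, 1)` expresses `∫ u` or `∫ w` through `∫ φ` and `∫ ψ`. Because `R_c k² = 4N²(1 - N²)`,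
such test pairs are combinations of `cosh (k(t - h/2))`, `sinh (k(t - h/2))` and quadratics in
`t - h/2`, whose integrals are elementary.
-/

/-- `coth x = cosh x / sinh x`. -/
noncomputable def cothR (x : ℝ) : ℝ := Real.cosh x / Real.sinh x

/-- The coefficient function `Φ(h,N,R_c)` of the micropolar Reynolds equation. -/
noncomputable def Phi (h N Rc : ℝ) : ℝ :=
  1 / 12 + Rc / (4 * h ^ 2 * (1 - N ^ 2)) -
    (1 / (4 * h)) * Real.sqrt (N ^ 2 * Rc / (1 - N ^ 2)) *
      cothR (N * h * Real.sqrt ((1 - N ^ 2) / Rc))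

/-- `(u, w)` is a (twice continuously differentiable) solution of the reduced
micropolar boundary-value problem on `[0, h]` with forcing constants `q, G`. -/
def IsReducedSolution (N Rc h q G : ℝ) (u w : ℝ → ℝ) : Prop :=
  ContDiffOn ℝ 2 u (Set.Icc 0 h) ∧ ContDiffOn ℝ 2 w (Set.Icc 0 h) ∧
  (∀ t ∈ Set.Icc (0 : ℝ) h,
    derivWithin (derivWithin u (Set.Icc 0 h)) (Set.Icc 0 h) t =
      q + 2 * N ^ 2 * derivWithin w (Set.Icc 0 h) t) ∧
  (∀ t ∈ Set.Icc (0 : ℝ) h,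
    -Rc * derivWithin (derivWithin w (Set.Icc 0 h)) (Set.Icc 0 h) t +
      4 * N ^ 2 * w t - 2 * N ^ 2 * derivWithin u (Set.Icc 0 h) t = G) ∧
  u 0 = 0 ∧ u h = 0 ∧ w 0 = 0 ∧ w h = 0

open Set Real MeasureTheory intervalIntegral

theorem Real.sinh_lt_mul_cosh_s13 {x : ℝ} (hx : 0 < x) : sinh x < x * cosh x := by
  have hmono : StrictMonoOn (fun y : ℝ => y * cosh y - sinh y) (Ici 0) := by
    refine strictMonoOn_of_deriv_pos (convex_Ici 0) (by fun_prop) fun y hy => ?_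
    rw [interior_Ici] at hy
    have hd : HasDerivAt (fun y : ℝ => y * cosh y - sinh y) (y * sinh y) y := by
      refine (((hasDerivAt_id y).mul (hasDerivAt_cosh y)).sub (hasDerivAt_sinh y)).congr_deriv ?_
      simp
    rw [hd.deriv]
    exact mul_pos hy (sinh_pos_iff.mpr hy)
  simpa using hmono self_mem_Ici hx.le hx

theorem DifferentiableOn.hasDerivAt_derivWithin_Icc {f : ℝ → ℝ} {a b t : ℝ}
    (hf : DifferentiableOn ℝ f (Icc a b)) (ht : t ∈ Ioo a b) :
    HasDerivAt f (derivWithin f (Icc a b) t) t := by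
  rw [derivWithin_of_mem_nhds (Icc_mem_nhds ht.1 ht.2)]
  exact hf.hasDerivAt (Icc_mem_nhds ht.1 ht.2)

def reducedConcomitant (N Rc : ℝ) (u u' w w' φ φ' ψ ψ' : ℝ → ℝ) (t : ℝ) : ℝ :=
  u' t * φ t - u t * φ' t - Rc * (w' t * ψ t - w t * ψ' t)
    - 2 * N ^ 2 * (u t * ψ t + w t * φ t)

theorem HasDerivAt.reducedConcomitant {N Rc t : ℝ}
    {u u' u'' w w' w'' φ φ' φ'' ψ ψ' ψ'' : ℝ → ℝ}
    (hu : HasDerivAt u (u' t) t) (hu' : HasDerivAt u' (u'' t) t)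
    (hw : HasDerivAt w (w' t) t) (hw' : HasDerivAt w' (w'' t) t)
    (hφ : HasDerivAt φ (φ' t) t) (hφ' : HasDerivAt φ' (φ'' t) t)
    (hψ : HasDerivAt ψ (ψ' t) t) (hψ' : HasDerivAt ψ' (ψ'' t) t) :
    HasDerivAt (reducedConcomitant N Rc u u' w w' φ φ' ψ ψ')
      ((u'' t - 2 * N ^ 2 * w' t) * φ t
        + (-Rc * w'' t + 4 * N ^ 2 * w t - 2 * N ^ 2 * u' t) * ψ t
        - u t * (φ'' t + 2 * N ^ 2 * ψ' t)
        - w t * (-Rc * ψ'' t + 4 * N ^ 2 * ψ t + 2 * N ^ 2 * φ' t)) t := by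
  refine ((((hu'.mul hφ).sub (hu.mul hφ')).sub
    (((hw'.mul hψ).sub (hw.mul hψ')).const_mul Rc)).sub
    (((hu.mul hψ).add (hw.mul hφ)).const_mul (2 * N ^ 2))).congr_deriv ?_
  ring

namespace IsReducedSolution

variable {N Rc h q G c₁ c₂ : ℝ} {u w φ φ' φ'' ψ ψ' ψ'' : ℝ → ℝ}

theorem hasDerivAt_reducedConcomitant (hsol : IsReducedSolution N Rc h q G u w)
    (hφ : ∀ t, HasDerivAt φ (φ' t) t) (hφ' : ∀ t, HasDerivAt φ' (φ'' t) t)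
    (hψ : ∀ t, HasDerivAt ψ (ψ' t) t) (hψ' : ∀ t, HasDerivAt ψ' (ψ'' t) t)
    (hadj₁ : ∀ t, φ'' t + 2 * N ^ 2 * ψ' t = c₁)
    (hadj₂ : ∀ t, -Rc * ψ'' t + 4 * N ^ 2 * ψ t + 2 * N ^ 2 * φ' t = c₂)
    {t : ℝ} (ht : t ∈ Ioo 0 h) :
    HasDerivAt (reducedConcomitant N Rc u (derivWithin u (Icc 0 h)) w (derivWithin w (Icc 0 h))
      φ φ' ψ ψ') (q * φ t + G * ψ t - c₁ * u t - c₂ * w t) t := by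
  obtain ⟨hu, hw, hequ, heqw, -⟩ := hsol
  have hI : UniqueDiffOn ℝ (Icc 0 h) := uniqueDiffOn_Icc (ht.1.trans ht.2)
  have hd : ∀ {f : ℝ → ℝ}, ContDiffOn ℝ 1 f (Icc 0 h) →
      HasDerivAt f (derivWithin f (Icc 0 h) t) t :=
    fun hf => (hf.differentiableOn one_ne_zero).hasDerivAt_derivWithin_Icc ht
  have htI := Ioo_subset_Icc_self ht
  refine ((hd (hu.of_le one_le_two)).reducedConcomitant (hd (hu.derivWithin hI (by norm_num)))
    (hd (hw.of_le one_le_two)) (hd (hw.derivWithin hI (by norm_num)))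
    (hφ t) (hφ' t) (hψ t) (hψ' t)).congr_deriv ?_
  rw [hequ t htI, heqw t htI, hadj₁, hadj₂]
  ring

theorem continuousOn_reducedConcomitant (hsol : IsReducedSolution N Rc h q G u w) (hh : 0 < h)
    (hφ : ∀ t, HasDerivAt φ (φ' t) t) (hφ' : ∀ t, HasDerivAt φ' (φ'' t) t)
    (hψ : ∀ t, HasDerivAt ψ (ψ' t) t) (hψ' : ∀ t, HasDerivAt ψ' (ψ'' t) t) :
    ContinuousOn (reducedConcomitant N Rc u (derivWithin u (Icc 0 h)) w (derivWithin w (Icc 0 h))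
      φ φ' ψ ψ') (Icc 0 h) := by
  obtain ⟨hu, hw, -⟩ := hsol
  have hI : UniqueDiffOn ℝ (Icc 0 h) := uniqueDiffOn_Icc hh
  have hc : ∀ {f f' : ℝ → ℝ}, (∀ t, HasDerivAt f (f' t) t) → ContinuousOn f (Icc 0 h) :=
    fun hf => (Differentiable.continuous fun t => (hf t).differentiableAt).continuousOn
  have := hu.continuousOn
  have := hw.continuousOn
  have := (hu.derivWithin hI (m := 1) (by norm_num)).continuousOn
  have := (hw.derivWithin hI (m := 1) (by norm_num)).continuousOn
  have := hc hφ
  have := hc hφ'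
  have := hc hψ
  have := hc hψ'
  unfold reducedConcomitant
  fun_prop

theorem integral_pairing (hsol : IsReducedSolution N Rc h q G u w) (hh : 0 < h)
    (hφ : ∀ t, HasDerivAt φ (φ' t) t) (hφ' : ∀ t, HasDerivAt φ' (φ'' t) t)
    (hψ : ∀ t, HasDerivAt ψ (ψ' t) t) (hψ' : ∀ t, HasDerivAt ψ' (ψ'' t) t)
    (hadj₁ : ∀ t, φ'' t + 2 * N ^ 2 * ψ' t = c₁)
    (hadj₂ : ∀ t, -Rc * ψ'' t + 4 * N ^ 2 * ψ t + 2 * N ^ 2 * φ' t = c₂)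
    (hφ0 : φ 0 = 0) (hφh : φ h = 0) (hψ0 : ψ 0 = 0) (hψh : ψ h = 0) :
    c₁ * (∫ t in 0..h, u t) + c₂ * ∫ t in 0..h, w t =
      q * (∫ t in 0..h, φ t) + G * ∫ t in 0..h, ψ t := by
  have hint : ∀ {f : ℝ → ℝ}, ContinuousOn f (Icc 0 h) → IntervalIntegrable f volume 0 h :=
    fun hf => (uIcc_of_le hh.le ▸ hf).intervalIntegrable
  have iu := hint hsol.1.continuousOn
  have iw := hint hsol.2.1.continuousOn
  have iφ := hint (Differentiable.continuous fun t => (hφ t).differentiableAt).continuousOn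
  have iψ := hint (Differentiable.continuous fun t => (hψ t).differentiableAt).continuousOn
  have hFTC := integral_eq_sub_of_hasDerivAt_of_le hh.le
    (hsol.continuousOn_reducedConcomitant hh hφ hφ' hψ hψ')
    (fun t ht => hsol.hasDerivAt_reducedConcomitant hφ hφ' hψ hψ' hadj₁ hadj₂ ht)
    ((((iφ.const_mul q).add (iψ.const_mul G)).sub (iu.const_mul c₁)).sub (iw.const_mul c₂))
  obtain ⟨-, -, -, -, hu0, huh, hw0, hwh⟩ := hsol
  simp only [reducedConcomitant, hu0, huh, hw0, hwh, hφ0, hφh, hψ0, hψh] at hFTC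
  rw [integral_sub (((iφ.const_mul q).add (iψ.const_mul G)).sub (iu.const_mul c₁))
      (iw.const_mul c₂), integral_sub ((iφ.const_mul q).add (iψ.const_mul G)) (iu.const_mul c₁),
    integral_add (iφ.const_mul q) (iψ.const_mul G)] at hFTC
  simp only [intervalIntegral.integral_const_mul, mul_zero, zero_mul, add_zero,
    sub_self] at hFTC
  linear_combination -hFTC

end IsReducedSolution

noncomputable def coshSinhQuadratic (k c a b p₂ p₁ e t : ℝ) : ℝ :=
  a * cosh (k * (t - c)) + b * sinh (k * (t - c)) + p₂ * (t - c) ^ 2 + p₁ * (t - c) + e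

namespace coshSinhQuadratic

variable (k c a b p₂ p₁ e : ℝ)

theorem hasDerivAt (t : ℝ) :
    HasDerivAt (coshSinhQuadratic k c a b p₂ p₁ e)
      (coshSinhQuadratic k c (k * b) (k * a) 0 (2 * p₂) p₁ t) t := by
  have hshift := (hasDerivAt_id t).sub_const c
  have hlin := hshift.const_mul k
  refine (((((hlin.cosh.const_mul a).add (hlin.sinh.const_mul b)).add
    ((hshift.fun_pow 2).const_mul p₂)).add (hshift.const_mul p₁)).add_const e).congr_deriv ?_
  simp only [coshSinhQuadratic, id]
  ring

theorem apply_zero (h : ℝ) :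
    coshSinhQuadratic k (h / 2) a b p₂ p₁ e 0 =
      a * cosh (k * h / 2) - b * sinh (k * h / 2) + p₂ * h ^ 2 / 4 - p₁ * h / 2 + e := by
  rw [coshSinhQuadratic, show k * (0 - h / 2) = -(k * h / 2) by ring, cosh_neg, sinh_neg]
  ring

theorem apply_self (h : ℝ) :
    coshSinhQuadratic k (h / 2) a b p₂ p₁ e h =
      a * cosh (k * h / 2) + b * sinh (k * h / 2) + p₂ * h ^ 2 / 4 + p₁ * h / 2 + e := by
  rw [coshSinhQuadratic, show k * (h - h / 2) = k * h / 2 by ring]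
  ring

theorem integral (h : ℝ) (hk : k ≠ 0) :
    ∫ t in 0..h, coshSinhQuadratic k (h / 2) a b p₂ p₁ e t =
      2 * a / k * sinh (k * h / 2) + p₂ * h ^ 3 / 12 + e * h := by
  have hF : ∀ t ∈ uIcc 0 h, HasDerivAt
      (fun t => coshSinhQuadratic k (h / 2) (b / k) (a / k) (p₁ / 2) 0 0 t
        + p₂ / 3 * (t - h / 2) ^ 3 + e * t)
      (coshSinhQuadratic k (h / 2) a b p₂ p₁ e t) t := fun t _ => by
    refine (((hasDerivAt k (h / 2) (b / k) (a / k) (p₁ / 2) 0 0 t).add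
      ((((hasDerivAt_id t).sub_const (h / 2)).fun_pow 3).const_mul (p₂ / 3))).add
      ((hasDerivAt_id t).const_mul e)).congr_deriv ?_
    simp only [coshSinhQuadratic, id]
    field_simp
    ring
  have hcont : Continuous (coshSinhQuadratic k (h / 2) a b p₂ p₁ e) := by
    unfold coshSinhQuadratic; fun_prop
  rw [integral_eq_sub_of_hasDerivAt hF (hcont.intervalIntegrable 0 h)]
  simp only [coshSinhQuadratic, show k * (h - h / 2) = k * h / 2 by ring,
    show k * (0 - h / 2) = -(k * h / 2) by ring, cosh_neg, sinh_neg]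
  field_simp
  ring

end coshSinhQuadratic

section IntegralIdentities

variable {N Rc h q G k : ℝ} {u w : ℝ → ℝ}

theorem IsReducedSolution.integral_u (hsol : IsReducedSolution N Rc h q G u w) (hh : 0 < h)
    (hk : k ≠ 0) (hN : 1 - N ^ 2 ≠ 0) (hkRc : Rc * k ^ 2 = 4 * N ^ 2 * (1 - N ^ 2)) :
    ∫ t in 0..h, u t =
      -(h ^ 3 / (1 - N ^ 2)) * (1 / 12 + N ^ 2 / (h * k) ^ 2
        - N ^ 2 / (2 * h * k) * cothR (k * h / 2)) * q := by
  rw [cothR]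
  set S := sinh (k * h / 2)
  set C := cosh (k * h / 2)
  have hS : S ≠ 0 := sinh_eq_zero.not.mpr (by positivity)
  have hpair := hsol.integral_pairing hh (c₁ := 4 * k * S * (1 - N ^ 2)) (c₂ := 0)
    (φ := coshSinhQuadratic k (h / 2) (-2 * N ^ 2 * h) 0 (2 * k * S) 0
      (2 * N ^ 2 * h * C - k * S * h ^ 2 / 2))
    (ψ := coshSinhQuadratic k (h / 2) 0 (k * h) 0 (-2 * k * S) 0)
    (coshSinhQuadratic.hasDerivAt _ _ _ _ _ _ _) (coshSinhQuadratic.hasDerivAt _ _ _ _ _ _ _)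
    (coshSinhQuadratic.hasDerivAt _ _ _ _ _ _ _) (coshSinhQuadratic.hasDerivAt _ _ _ _ _ _ _)
    (fun t => by simp only [coshSinhQuadratic]; ring)
    (fun t => by
      simp only [coshSinhQuadratic]
      linear_combination (-k * h * sinh (k * (t - h / 2))) * hkRc)
    (by rw [coshSinhQuadratic.apply_zero]; ring) (by rw [coshSinhQuadratic.apply_self]; ring)
    (by rw [coshSinhQuadratic.apply_zero]; ring) (by rw [coshSinhQuadratic.apply_self]; ring)
  rw [coshSinhQuadratic.integral _ _ _ _ _ _ _ hk, coshSinhQuadratic.integral _ _ _ _ _ _ _ hk]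
    at hpair
  have hu : ∫ t in 0..h, u t =
      q * (2 * N ^ 2 * h ^ 2 * C - 4 * N ^ 2 * h * S / k - k * S * h ^ 3 / 3)
        / (4 * k * S * (1 - N ^ 2)) := by
    rw [eq_div_iff (by positivity)]
    linear_combination hpair
  rw [hu]
  field_simp
  ring

theorem IsReducedSolution.integral_w (hsol : IsReducedSolution N Rc h q G u w) (hh : 0 < h)
    (hk : 0 < k) (hN0 : N ≠ 0) (hN1 : N ^ 2 < 1) (hkRc : Rc * k ^ 2 = 4 * N ^ 2 * (1 - N ^ 2)) :
    ∫ t in 0..h, w t =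
      (h / (4 * N ^ 2)) * ((2 * tanh (k * h / 2) - k * h) /
        (2 * N ^ 2 * tanh (k * h / 2) - k * h)) * G := by
  rw [tanh_eq_sinh_div_cosh]
  set S := sinh (k * h / 2)
  set C := cosh (k * h / 2)
  have hpair := hsol.integral_pairing hh (c₁ := 0) (c₂ := 4 * N ^ 2 * (2 * N ^ 2 * S - k * h * C))
    (φ := coshSinhQuadratic k (h / 2) 0 (-2 * N ^ 2 * h) 0 (4 * N ^ 2 * S) 0)
    (ψ := coshSinhQuadratic k (h / 2) (k * h) 0 0 0 (-k * h * C))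
    (coshSinhQuadratic.hasDerivAt _ _ _ _ _ _ _) (coshSinhQuadratic.hasDerivAt _ _ _ _ _ _ _)
    (coshSinhQuadratic.hasDerivAt _ _ _ _ _ _ _) (coshSinhQuadratic.hasDerivAt _ _ _ _ _ _ _)
    (fun t => by simp only [coshSinhQuadratic]; ring)
    (fun t => by
      simp only [coshSinhQuadratic]
      linear_combination (-k * h * cosh (k * (t - h / 2))) * hkRc)
    (by rw [coshSinhQuadratic.apply_zero]; ring) (by rw [coshSinhQuadratic.apply_self]; ring)
    (by rw [coshSinhQuadratic.apply_zero]; ring) (by rw [coshSinhQuadratic.apply_self]; ring)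
  rw [coshSinhQuadratic.integral _ _ _ _ _ _ _ hk.ne',
    coshSinhQuadratic.integral _ _ _ _ _ _ _ hk.ne',
    show 2 * (k * h) / k = 2 * h by field_simp] at hpair
  have hC : 0 < C := cosh_pos _
  have hden : 2 * N ^ 2 * S - k * h * C < 0 := by
    have hS : 0 < S := sinh_pos_iff.mpr (by positivity)
    have := sinh_lt_mul_cosh_s13 (show 0 < k * h / 2 by positivity)
    nlinarith
  have hw : ∫ t in 0..h, w t =
      G * h * (2 * S - k * h * C) / (4 * N ^ 2 * (2 * N ^ 2 * S - k * h * C)) := by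
    rw [eq_div_iff (by simp [hN0, hden.ne])]
    linear_combination hpair
  rw [hw]
  field_simp

end IntegralIdentities

theorem mul_sq_eq_of_eq_two_mul_sqrt {N Rc k : ℝ} (hN : N ^ 2 ≤ 1) (hRc : 0 < Rc)
    (hk : k = 2 * N * √((1 - N ^ 2) / Rc)) : Rc * k ^ 2 = 4 * N ^ 2 * (1 - N ^ 2) := by
  rw [hk, mul_pow, sq_sqrt (div_nonneg (by linarith) hRc.le)]
  field_simp
  ring

theorem Phi_eq_of_eq_two_mul_sqrt {N Rc h k : ℝ} (hN : N ^ 2 < 1) (hRc : 0 < Rc)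
    (hk : k = 2 * N * √((1 - N ^ 2) / Rc)) (hk0 : 0 < k) :
    Phi h N Rc = 1 / 12 + N ^ 2 / (h * k) ^ 2 - N ^ 2 / (2 * h * k) * cothR (k * h / 2) := by
  have hRc_eq : Rc = 4 * N ^ 2 * (1 - N ^ 2) / k ^ 2 := by
    rw [eq_div_iff (by positivity)]
    exact mul_sq_eq_of_eq_two_mul_sqrt hN.le hRc hk
  have hN' : 1 - N ^ 2 ≠ 0 := by linarith
  have hsqrt : √(N ^ 2 * Rc / (1 - N ^ 2)) = 2 * N ^ 2 / k := by
    rw [hRc_eq, ← sqrt_sq (by positivity : 0 ≤ 2 * N ^ 2 / k)]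
    congr 1
    field_simp
    ring
  rw [Phi, hsqrt, show N * h * √((1 - N ^ 2) / Rc) = k * h / 2 by rw [hk]; ring, hRc_eq]
  field_simp
  ring

/-- Integral identities of the Appendix: for every solution of the reduced
micropolar boundary-value problem with forcings `q, G`,
`∫₀ʰ u = −(h³/(1−N²)) Φ(h,N,R_c) q` and
`∫₀ʰ w = (h/(4N²)) (2 tanh(kh/2) − kh)/(2N² tanh(kh/2) − kh) G`. -/
theorem reduced_micropolar_integral_identities
    (N Rc h q G : ℝ) (hN0 : 0 < N) (hN1 : N < 1) (hRc : 0 < Rc) (hh : 0 < h)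
    (k : ℝ) (hk : k = 2 * N * Real.sqrt ((1 - N ^ 2) / Rc))
    (u w : ℝ → ℝ) (hsol : IsReducedSolution N Rc h q G u w) :
    (∫ t in (0 : ℝ)..h, u t = -(h ^ 3 / (1 - N ^ 2)) * Phi h N Rc * q) ∧
    (∫ t in (0 : ℝ)..h, w t =
      (h / (4 * N ^ 2)) *
        ((2 * Real.tanh (k * h / 2) - k * h) /
          (2 * N ^ 2 * Real.tanh (k * h / 2) - k * h)) * G) := by
  have hN : N ^ 2 < 1 := by nlinarith
  have hk0 : 0 < k := by
    have : 0 < √((1 - N ^ 2) / Rc) := sqrt_pos.mpr (div_pos (by linarith) hRc)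
    rw [hk]
    positivity
  have hkRc := mul_sq_eq_of_eq_two_mul_sqrt hN.le hRc hk
  refine ⟨?_, hsol.integral_w hh hk0 hN0.ne' hN hkRc⟩
  rw [Phi_eq_of_eq_two_mul_sqrt hN hRc hk hk0]
  exact hsol.integral_u hh hk0.ne' (by linarith) hkRc
end
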